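/- Let q be a prime power, m ≥ 2 an integer, and n = q^m − 1. Suppose m is even. For every integer x with 1 ≤ x < q^{m/2} − 1 whose q-ary expansion x = x_0 + x_1 q + ⋯ + x_{m−1} q^{m−1} (with 0 ≤ x_i < q) satisfies x_i = 0 for all i ≥ m/2, every element y of the q-ary cyclotomic coset of n − x modulo n satisfies y ≥ q^{m/2} − 1. -/

import Mathlib

/-! Modulo `n = q^M - 1`, multiplication by `q` rotates the `M` base-`q` digits cyclically, and
`n - x` is the digitwise complement of `x`, so every element of the coset of `n - x` is `n` minus
a rotation of `x`. As `x ≤ q^h - 2` with `2h ≤ M`, the nonzero digits of `x` fill at most half of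
the cycle, which keeps each rotation of `x` at most `q^M - q^h`. -/

/-- The `q`-ary cyclotomic coset of `x` modulo `n`: `{x q^k mod n : k ≥ 0}`. -/
def cycCoset (q n x : ℕ) : Set ℕ := {y | ∃ k : ℕ, y = x * q ^ k % n}

namespace Nat

theorem sub_mul_mod_of_mul_mod_ne_zero {n x c : ℕ} (hx : x ≤ n) (h : x * c % n ≠ 0) :
    (n - x) * c % n = n - x * c % n := by
  have hpos : 0 < n := by
    refine pos_of_ne_zero ?_
    rintro rfl
    obtain rfl : x = 0 := by omega
    simp at h
  have key : (n - x) * c ≡ n - x * c % n [MOD n] := by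
    refine ModEq.add_right_cancel' (x * c) ?_
    calc (n - x) * c + x * c = n * c := by rw [← add_mul, Nat.sub_add_cancel hx]
      _ ≡ 0 [MOD n] := modEq_zero_iff_dvd.2 (dvd_mul_right n c)
      _ ≡ n - x * c % n + x * c % n [MOD n] := by
          rw [Nat.sub_add_cancel (mod_lt _ hpos).le]
          exact (modEq_zero_iff_dvd.2 dvd_rfl).symm
      _ ≡ n - x * c % n + x * c [MOD n] := (mod_modEq _ _).add_left _
  calc (n - x) * c % n = (n - x * c % n) % n := key
    _ = n - x * c % n := mod_eq_of_lt (by omega)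

end Nat

section Rotation

variable {q M : ℕ}

theorem pow_modEq_pow_mod (hq : 0 < q) (k : ℕ) : q ^ k ≡ q ^ (k % M) [MOD q ^ M - 1] := by
  have hqM : q ^ M ≡ 1 [MOD q ^ M - 1] := Nat.modEq_sub (Nat.one_le_pow _ _ hq)
  calc q ^ k = (q ^ M) ^ (k / M) * q ^ (k % M) := by rw [← pow_mul, ← pow_add, Nat.div_add_mod]
    _ ≡ 1 ^ (k / M) * q ^ (k % M) [MOD q ^ M - 1] := (hqM.pow _).mul_right _
    _ = q ^ (k % M) := by rw [one_pow, one_mul]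

theorem mul_pow_modEq_div_add_mod_mul (hq : 0 < q) {t j : ℕ} (htj : t + j = M) (x : ℕ) :
    x * q ^ j ≡ x / q ^ t + x % q ^ t * q ^ j [MOD q ^ M - 1] := by
  have hqM : q ^ M ≡ 1 [MOD q ^ M - 1] := Nat.modEq_sub (Nat.one_le_pow _ _ hq)
  calc x * q ^ j = x / q ^ t * q ^ M + x % q ^ t * q ^ j := by
        rw [← htj, pow_add, ← mul_assoc, ← add_mul, mul_comm _ (q ^ t), Nat.div_add_mod]
    _ ≡ x / q ^ t * 1 + x % q ^ t * q ^ j [MOD q ^ M - 1] := (hqM.mul_left _).add_right _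
    _ = x / q ^ t + x % q ^ t * q ^ j := by rw [mul_one]

theorem coprime_pow_sub_one (hq : 0 < q) (hM : M ≠ 0) : Nat.Coprime q (q ^ M - 1) :=
  Nat.Coprime.coprime_dvd_left (dvd_pow_self q hM)
    ((Nat.coprime_self_sub_right (Nat.one_le_pow _ _ hq)).2 (Nat.coprime_one_right _))

theorem mul_pow_mod_pow_sub_one_ne_zero (hq : 0 < q) (hM : M ≠ 0) {x : ℕ} (hx0 : 0 < x)
    (hx : x < q ^ M - 1) (k : ℕ) : x * q ^ k % (q ^ M - 1) ≠ 0 := by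
  intro h
  have hdvd : q ^ M - 1 ∣ x :=
    ((coprime_pow_sub_one hq hM).pow_left k).symm.dvd_of_dvd_mul_right (Nat.dvd_of_mod_eq_zero h)
  exact absurd (Nat.le_of_dvd hx0 hdvd) (by omega)

theorem div_add_mod_mul_pow_le (hq : 2 ≤ q) {h x t j : ℕ} (hM : 2 * h ≤ M)
    (hx : x + 2 ≤ q ^ h) (htj : t + j = M) : x / q ^ t + x % q ^ t * q ^ j ≤ q ^ M - q ^ h := by
  have hq0 : 0 < q := by omega
  have hqt : q ^ t * q ^ j = q ^ M := by rw [← pow_add, htj]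
  rcases le_or_gt h t with hht | hth
  -- no digit of `x` wraps around
  · have hxt : x < q ^ t := by have := Nat.pow_le_pow_right hq0 hht; omega
    have hhh : q ^ h * q ^ (M - h) = q ^ M := by rw [← pow_add]; congr 1; omega
    have h2h : 2 * q ^ h ≤ 2 * q ^ (M - h) := by gcongr; omega
    have hxj : x * q ^ j ≤ (q ^ h - 2) * q ^ (M - h) :=
      Nat.mul_le_mul (by omega) (Nat.pow_le_pow_right hq0 (by omega))
    rw [Nat.div_eq_of_lt hxt, Nat.mod_eq_of_lt hxt, Nat.sub_mul] at *
    omega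
  -- the digits of `x` above position `t` wrap around to the bottom
  · have hmod : (x % q ^ t + 1) * q ^ j ≤ q ^ t * q ^ j :=
      Nat.mul_le_mul_right _ (Nat.mod_lt _ (by positivity))
    have hqj : 2 * q ^ h ≤ q ^ j :=
      calc 2 * q ^ h ≤ q ^ h * q := by rw [mul_comm]; gcongr
        _ = q ^ (h + 1) := (pow_succ q h).symm
        _ ≤ q ^ j := Nat.pow_le_pow_right hq0 (by omega)
    have hdiv : x / q ^ t ≤ x := Nat.div_le_self _ _
    rw [add_one_mul] at hmod
    omega

theorem mul_pow_mod_pow_sub_one_le (hq : 2 ≤ q) {h x : ℕ} (hM : 2 * h ≤ M)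
    (hx : x + 2 ≤ q ^ h) (k : ℕ) : x * q ^ k % (q ^ M - 1) ≤ q ^ M - q ^ h := by
  have hq0 : 0 < q := by omega
  have hM0 : 0 < M := by
    rcases Nat.eq_zero_or_pos h with rfl | hh
    · simp at hx
    · omega
  have htj : M - k % M + k % M = M := Nat.sub_add_cancel (Nat.mod_lt k hM0).le
  have hrot := ((pow_modEq_pow_mod hq0 k).mul_left x).trans
    (mul_pow_modEq_div_add_mod_mul hq0 htj x)
  have hle := div_add_mod_mul_pow_le hq hM hx htj
  have hhM : q ^ h ≤ q ^ M := Nat.pow_le_pow_right hq0 (by omega)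
  rw [hrot, Nat.mod_eq_of_lt (by omega)]
  exact hle

theorem le_sub_mul_pow_mod_pow_sub_one (hq : 2 ≤ q) {h x : ℕ} (hM : 2 * h ≤ M) (hx0 : 0 < x)
    (hx : x + 2 ≤ q ^ h) (k : ℕ) : q ^ h - 1 ≤ (q ^ M - 1 - x) * q ^ k % (q ^ M - 1) := by
  have hhM : q ^ h ≤ q ^ M := Nat.pow_le_pow_right (by omega) (by omega)
  have hM0 : M ≠ 0 := by
    rintro rfl
    obtain rfl : h = 0 := by omega
    simp at hx
  rw [Nat.sub_mul_mod_of_mul_mod_ne_zero (by omega)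
    (mul_pow_mod_pow_sub_one_ne_zero (by omega) hM0 hx0 (by omega) k)]
  have := mul_pow_mod_pow_sub_one_le hq hM hx k
  omega

end Rotation

theorem cycCoset_neg_min_even_general
    (q m : ℕ)
    (x : ℕ) (hx1 : 1 ≤ x) (hx2 : x < q ^ (m / 2) - 1) :
    ∀ y ∈ cycCoset q (q ^ m - 1) (q ^ m - 1 - x), q ^ (m / 2) - 1 ≤ y := by
  have hq2 : 2 ≤ q := by
    by_contra! hq1
    have : q ^ (m / 2) ≤ 1 := pow_le_one₀ (Nat.zero_le q) (by omega)
    omega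
  rintro y ⟨k, rfl⟩
  exact le_sub_mul_pow_mod_pow_sub_one hq2 (by omega) hx1 (by omega) k

/-- Even-`m` case (step 3a of the paper's Theorem 2): for `n = q^m - 1` with
`m ≥ 2` even, and `1 ≤ x < q^{m/2} - 1` whose `q`-ary digits `x_i = x / q^i % q`
vanish for `i ≥ m/2`, every element of the `q`-ary cyclotomic coset of `n - x`
is at least `q^{m/2} - 1`. -/
theorem cycCoset_neg_min_even
    (q m : ℕ) (hq : IsPrimePow q) (hm : 2 ≤ m) (hme : Even m)
    (x : ℕ) (hx1 : 1 ≤ x) (hx2 : x < q ^ (m / 2) - 1)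
    (hdigits : ∀ i : ℕ, m / 2 ≤ i → x / q ^ i % q = 0) :
    ∀ y ∈ cycCoset q (q ^ m - 1) (q ^ m - 1 - x), q ^ (m / 2) - 1 ≤ y :=
  cycCoset_neg_min_even_general q m x hx1 hx2
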